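/- For every integer n ≥ 1, in the algebra B_n the element w = 3n(n+6)·e − (n+2)(n+4)·f + 3·x satisfies u·w = ((n+1)/(n+3))·w, v·w = ((n+5)/(n+3))·w, and (u|w) = (v|w) = 0; moreover (n+1)/(n+3) = h^(n)_{1,3} and (n+5)/(n+3) = h^(n+1)_{3,1}, so w is a highest weight vector for ⟨u⟩⊗⟨v⟩ of highest weight (h^(n)_{1,3}, h^(n+1)_{3,1}). -/

import Mathlib

open Matrix

/-- The basis vector `e` (the Ising vector) of the Griess algebra `B_n` of `A(1/2, c¹_n)`. -/
noncomputable def Be : Fin 3 → ℂ := ![1, 0, 0]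

/-- The basis vector `f` of the Griess algebra `B_n`. -/
noncomputable def Bf : Fin 3 → ℂ := ![0, 1, 0]

/-- The basis vector `x` of the Griess algebra `B_n`. -/
noncomputable def Bx : Fin 3 → ℂ := ![0, 0, 1]

/-- The commutative product of the Griess algebra `B_n` of `A(1/2, c¹_n)`, written in
coordinates with respect to the basis `{e, f, x}`: it is determined by
`e·e = 2e`, `f·f = 2f`, `e·f = 0`, `e·x = (1/2)x`, `f·x = (3/2)x`,
`x·x = 2n(n+6)e + 2(n+2)(n+4)f`. -/
noncomputable def Bmul (n : ℕ) (a b : Fin 3 → ℂ) : Fin 3 → ℂ :=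
  ![2 * a 0 * b 0 + 2 * (n : ℂ) * ((n : ℂ) + 6) * a 2 * b 2,
    2 * a 1 * b 1 + 2 * ((n : ℂ) + 2) * ((n : ℂ) + 4) * a 2 * b 2,
    (1 / 2) * (a 0 * b 2 + a 2 * b 0) + (3 / 2) * (a 1 * b 2 + a 2 * b 1)]

/-- The invariant symmetric bilinear form of the Griess algebra `B_n`, determined by
`(e|e) = 1/4`, `(f|f) = (3/4)(1 − 8/((n+2)(n+4)))`, `(x|x) = n(n+6)`,
`(e|f) = (e|x) = (f|x) = 0`. -/
noncomputable def Bform (n : ℕ) (a b : Fin 3 → ℂ) : ℂ :=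
  (1 / 4) * a 0 * b 0 + (3 / 4) * (1 - 8 / (((n : ℂ) + 2) * ((n : ℂ) + 4))) * a 1 * b 1
    + (n : ℂ) * ((n : ℂ) + 6) * a 2 * b 2

/-- The Virasoro vector `u = (1/(2(n+3)))(n e + (n+4) f + x)` of `B_n`. -/
noncomputable def Bu (n : ℕ) : Fin 3 → ℂ :=
  (1 / (2 * ((n : ℂ) + 3))) • ((n : ℂ) • Be + ((n : ℂ) + 4) • Bf + Bx)

/-- The Virasoro vector `v = e + f − u` of `B_n`. -/
noncomputable def Bv (n : ℕ) : Fin 3 → ℂ := Be + Bf - Bu n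

/-- The involution `σ` of `B_n`: `σ(e) = e`, `σ(f) = f`, `σ(x) = −x`. -/
noncomputable def Bsigma : (Fin 3 → ℂ) → (Fin 3 → ℂ) := fun a => ![a 0, a 1, -a 2]

/-- The highest weight vector `w = 3n(n+6)e − (n+2)(n+4)f + 3x` of `B_n`. -/
noncomputable def Bw (n : ℕ) : Fin 3 → ℂ :=
  (3 * (n : ℂ) * ((n : ℂ) + 6)) • Be - (((n : ℂ) + 2) * ((n : ℂ) + 4)) • Bf + (3 : ℂ) • Bx

/-- The conformal weight `h^(m)_{r,s}` of the unitary Virasoro minimal model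
of central charge `c⁰_m`. -/
noncomputable def hWt (m : ℕ) (r s : ℤ) : ℚ :=
  (((r : ℚ) * ((m : ℚ) + 3) - (s : ℚ) * ((m : ℚ) + 2)) ^ 2 - 1) /
    (4 * ((m : ℚ) + 2) * ((m : ℚ) + 3))

/-! The element `e + f` acts on `B_n` as twice the identity (the `e`- and `f`-eigenvalues `1/2`
and `3/2` on `x` add up to `2`) and is orthogonal to `w`. Hence the eigenvalue and the
orthogonality statements for `v = e + f − u` follow from those for `u`, which, like the two
values of `h`, are direct computations in coordinates. -/

section GriessAlgebra

variable (n : ℕ)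

lemma Bmul_sub_left (a b c : Fin 3 → ℂ) : Bmul n (a - b) c = Bmul n a c - Bmul n b c := by
  funext i
  fin_cases i <;> simp [Bmul] <;> ring

lemma Bform_sub_left (a b c : Fin 3 → ℂ) : Bform n (a - b) c = Bform n a c - Bform n b c := by
  simp only [Bform, Pi.sub_apply]
  ring

lemma Bmul_Be_add_Bf (a : Fin 3 → ℂ) : Bmul n (Be + Bf) a = (2 : ℂ) • a := by
  funext i
  fin_cases i <;> simp [Bmul, Be, Bf]
  ring

lemma Bform_Be_add_Bf_Bw : Bform n (Be + Bf) (Bw n) = 0 := by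
  have h2 : (n : ℂ) + 2 ≠ 0 := by exact_mod_cast (by omega : n + 2 ≠ 0)
  have h4 : (n : ℂ) + 4 ≠ 0 := by exact_mod_cast (by omega : n + 4 ≠ 0)
  simp [Bform, Bw, Be, Bf, Bx]
  field_simp
  ring

lemma Bmul_Bu_Bw : Bmul n (Bu n) (Bw n) = (((n : ℂ) + 1) / ((n : ℂ) + 3)) • Bw n := by
  have h3 : (n : ℂ) + 3 ≠ 0 := by exact_mod_cast (by omega : n + 3 ≠ 0)
  funext i
  fin_cases i <;> simp [Bmul, Bu, Bw, Be, Bf, Bx] <;> field_simp <;> ring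

lemma Bform_Bu_Bw : Bform n (Bu n) (Bw n) = 0 := by
  have h2 : (n : ℂ) + 2 ≠ 0 := by exact_mod_cast (by omega : n + 2 ≠ 0)
  have h3 : (n : ℂ) + 3 ≠ 0 := by exact_mod_cast (by omega : n + 3 ≠ 0)
  have h4 : (n : ℂ) + 4 ≠ 0 := by exact_mod_cast (by omega : n + 4 ≠ 0)
  simp [Bform, Bu, Bw, Be, Bf, Bx]
  field_simp
  ring

lemma Bmul_Bv_Bw : Bmul n (Bv n) (Bw n) = (((n : ℂ) + 5) / ((n : ℂ) + 3)) • Bw n := by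
  have h3 : (n : ℂ) + 3 ≠ 0 := by exact_mod_cast (by omega : n + 3 ≠ 0)
  have hweight : (2 : ℂ) - ((n : ℂ) + 1) / ((n : ℂ) + 3) = ((n : ℂ) + 5) / ((n : ℂ) + 3) := by
    field_simp
    ring
  rw [Bv, Bmul_sub_left, Bmul_Be_add_Bf, Bmul_Bu_Bw, ← sub_smul, hweight]

lemma Bform_Bv_Bw : Bform n (Bv n) (Bw n) = 0 := by
  rw [Bv, Bform_sub_left, Bform_Be_add_Bf_Bw, Bform_Bu_Bw, sub_zero]

end GriessAlgebra

lemma hWt_one_three (m : ℕ) : hWt m 1 3 = ((m : ℚ) + 1) / ((m : ℚ) + 3) := by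
  rw [hWt, div_eq_div_iff (by positivity) (by positivity)]
  push_cast
  ring

lemma hWt_three_one (m : ℕ) : hWt m 3 1 = ((m : ℚ) + 4) / ((m : ℚ) + 2) := by
  rw [hWt, div_eq_div_iff (by positivity) (by positivity)]
  push_cast
  ring

theorem stmt_13_general (n : ℕ) :
    Bmul n (Bu n) (Bw n) = ((((n : ℂ) + 1) / ((n : ℂ) + 3))) • Bw n ∧
    Bmul n (Bv n) (Bw n) = ((((n : ℂ) + 5) / ((n : ℂ) + 3))) • Bw n ∧
    Bform n (Bu n) (Bw n) = 0 ∧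
    Bform n (Bv n) (Bw n) = 0 ∧
    ((n : ℚ) + 1) / ((n : ℚ) + 3) = hWt n 1 3 ∧
    ((n : ℚ) + 5) / ((n : ℚ) + 3) = hWt (n + 1) 3 1 := by
  refine ⟨Bmul_Bu_Bw n, Bmul_Bv_Bw n, Bform_Bu_Bw n, Bform_Bv_Bw n, (hWt_one_three n).symm, ?_⟩
  rw [hWt_three_one]
  push_cast
  ring

theorem stmt_13 (n : ℕ) (hn : 1 ≤ n) :
    Bmul n (Bu n) (Bw n) = ((((n : ℂ) + 1) / ((n : ℂ) + 3))) • Bw n ∧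
    Bmul n (Bv n) (Bw n) = ((((n : ℂ) + 5) / ((n : ℂ) + 3))) • Bw n ∧
    Bform n (Bu n) (Bw n) = 0 ∧
    Bform n (Bv n) (Bw n) = 0 ∧
    ((n : ℚ) + 1) / ((n : ℚ) + 3) = hWt n 1 3 ∧
    ((n : ℚ) + 5) / ((n : ℚ) + 3) = hWt (n + 1) 3 1 :=
  stmt_13_general n
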